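/- arXiv:2508.15183 — 2 statements merged into one kernel-verified Lean document; each statement's English description precedes it below -/
import Mathlib

section
/- Fix d ∈ ℕ, reals ε' > 0 and ε_1, …, ε_d > 0, and integers a_1, …, a_d and b_1, …, b_d with |a_j − b_j| ≤ 1 for every j ∈ {1, …, d}. Define A = ∑_{k=0}^∞ Geo(e^{−ε'})(k) · ∏_{j=1}^{d} Geo(e^{−ε_j})(< k − a_j) and A' = ∑_{k=0}^∞ Geo(e^{−ε'})(k) · ∏_{j=1}^{d} Geo(e^{−ε_j})(< k − b_j). Then A ≤ e^{ε'} · A'. (This is the probability that the AboveThreshold mechanism outputs ⊥, i.e., no noisy query exceeds the noisy threshold, on two neighboring datasets; the bound is the ex-post DP guarantee ε' for output ⊥.) -/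
open Real Finset

/-- The geometric distribution with failure probability `p`: mass `(1-p)·p^k` at each
integer `k ≥ 0`, and `0` at negative integers. -/
noncomputable def Geo (p : ℝ) (k : ℤ) : ℝ := if 0 ≤ k then (1 - p) * p ^ k.toNat else 0

/-- `Geo(p)(< x) = ∑_{y=0}^{x-1} Geo(p)(y)` (which is `0` when `x ≤ 0`). -/
noncomputable def GeoLT (p : ℝ) (x : ℤ) : ℝ := ∑ y ∈ Finset.range x.toNat, Geo p (y : ℤ)

/-! Shifting the threshold noise by one step costs exactly a factor `e^{ε'}` in its geometric
density, `Geo(e^{-ε'})(k) = e^{ε'} · Geo(e^{-ε'})(k + 1)`, while raising the threshold from `k` to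
`k + 1` compensates for replacing `a_j` by `b_j ≥ a_j - 1` in every CDF factor.
Comparing the `k`-th term of `A` with the `(k+1)`-st term of `A'` and dropping the `0`-th term of
`A'` gives `A ≤ e^{ε'} A'`. -/

section Geo

variable {p : ℝ}

theorem Geo_natCast (p : ℝ) (k : ℕ) : Geo p k = (1 - p) * p ^ k := by
  simp [Geo]

theorem Geo_natCast_succ (p : ℝ) (k : ℕ) : Geo p (k + 1 : ℕ) = p * Geo p k := by
  rw [Geo_natCast, Geo_natCast, pow_succ]
  ring

theorem Geo_exp_neg_natCast (t : ℝ) (k : ℕ) :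
    Geo (exp (-t)) k = exp t * Geo (exp (-t)) (k + 1 : ℕ) := by
  rw [Geo_natCast_succ, ← mul_assoc, ← exp_add, add_neg_cancel, exp_zero, one_mul]

theorem Geo_nonneg (hp0 : 0 ≤ p) (hp1 : p ≤ 1) (k : ℤ) : 0 ≤ Geo p k := by
  unfold Geo
  split_ifs
  exacts [mul_nonneg (sub_nonneg.2 hp1) (pow_nonneg hp0 _), le_rfl]

theorem GeoLT_nonneg (hp0 : 0 ≤ p) (hp1 : p ≤ 1) (x : ℤ) : 0 ≤ GeoLT p x :=
  sum_nonneg fun _ _ => Geo_nonneg hp0 hp1 _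

theorem GeoLT_le_one (hp0 : 0 ≤ p) (x : ℤ) : GeoLT p x ≤ 1 := by
  have htelescope : GeoLT p x = 1 - p ^ x.toNat := by
    simp only [GeoLT, Geo_natCast, ← mul_sum]
    linear_combination (-1 : ℝ) * geom_sum_mul p x.toNat
  rw [htelescope]
  exact sub_le_self _ (pow_nonneg hp0 _)

theorem GeoLT_mono (hp0 : 0 ≤ p) (hp1 : p ≤ 1) : Monotone (GeoLT p) := fun _ _ hxy =>
  sum_le_sum_of_subset_of_nonneg (range_subset_range.2 (Int.toNat_le_toNat hxy))
    fun _ _ _ => Geo_nonneg hp0 hp1 _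

theorem summable_Geo_mul (hp0 : 0 ≤ p) (hp1 : p < 1) {h : ℕ → ℝ} (h0 : ∀ k, 0 ≤ h k)
    (h1 : ∀ k, h k ≤ 1) : Summable fun k : ℕ => Geo p k * h k := by
  refine (summable_geometric_of_lt_one hp0 hp1).mul_left (1 - p) |>.of_nonneg_of_le
    (fun k => mul_nonneg (Geo_nonneg hp0 hp1.le _) (h0 k)) fun k => ?_
  rw [← Geo_natCast]
  exact mul_le_of_le_one_right (Geo_nonneg hp0 hp1.le _) (h1 k)

end Geo

section ProdGeoLT

variable {ι : Type*} (s : Finset ι) {q : ι → ℝ} (hq0 : ∀ j, 0 ≤ q j) (hq1 : ∀ j, q j ≤ 1)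
include hq0 hq1

theorem prod_GeoLT_nonneg (x : ι → ℤ) : 0 ≤ ∏ j ∈ s, GeoLT (q j) (x j) :=
  prod_nonneg fun j _ => GeoLT_nonneg (hq0 j) (hq1 j) _

theorem prod_GeoLT_le_one (x : ι → ℤ) : ∏ j ∈ s, GeoLT (q j) (x j) ≤ 1 :=
  prod_le_one (fun j _ => GeoLT_nonneg (hq0 j) (hq1 j) _)
    fun j _ => GeoLT_le_one (hq0 j) _

theorem prod_GeoLT_le_prod_GeoLT {x y : ι → ℤ} (hxy : ∀ j, x j ≤ y j) :
    ∏ j ∈ s, GeoLT (q j) (x j) ≤ ∏ j ∈ s, GeoLT (q j) (y j) :=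
  prod_le_prod (fun j _ => GeoLT_nonneg (hq0 j) (hq1 j) _)
    fun j _ => GeoLT_mono (hq0 j) (hq1 j) (hxy j)

end ProdGeoLT

theorem tsum_le_mul_tsum_of_le_mul_succ {f g : ℕ → ℝ} {c : ℝ} (hc : 0 ≤ c) (hf0 : ∀ k, 0 ≤ f k)
    (hf : Summable f) (hg : Summable g) (hgf : ∀ k, g k ≤ c * f (k + 1)) :
    ∑' k, g k ≤ c * ∑' k, f k := by
  have hf_succ : Summable fun k => f (k + 1) := (summable_nat_add_iff 1).2 hf
  calc ∑' k, g k ≤ ∑' k, c * f (k + 1) := hg.tsum_le_tsum hgf (hf_succ.mul_left c)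
    _ = c * ∑' k, f (k + 1) := tsum_mul_left
    _ ≤ c * ∑' k, f k := by
      rw [hf.tsum_eq_zero_add]
      exact mul_le_mul_of_nonneg_left (le_add_of_nonneg_left (hf0 0)) hc

/-- Ex-post DP guarantee of the AboveThreshold mechanism for the output `⊥`:
on neighboring datasets with query values `a j` and `b j` (sensitivity 1), the probability
that no noisy query exceeds the noisy threshold increases by at most a factor `e^(ε')`. -/
theorem abovethreshold_expost_bot
    (d : ℕ) (ε' : ℝ) (hε' : 0 < ε')
    (ε : Fin d → ℝ) (hε : ∀ j, 0 < ε j)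
    (a b : Fin d → ℤ) (hab : ∀ j, |a j - b j| ≤ 1) :
    (∑' k : ℕ, Geo (Real.exp (-ε')) k *
        ∏ j : Fin d, GeoLT (Real.exp (-(ε j))) (k - a j))
    ≤ Real.exp ε' *
      ∑' k : ℕ, Geo (Real.exp (-ε')) k *
        ∏ j : Fin d, GeoLT (Real.exp (-(ε j))) (k - b j) := by
  have hp0 : 0 ≤ exp (-ε') := (exp_pos _).le
  have hp1 : exp (-ε') < 1 := exp_lt_one_iff.2 (neg_lt_zero.2 hε')
  have hq0 : ∀ j, 0 ≤ exp (-ε j) := fun j => (exp_pos _).le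
  have hq1 : ∀ j, exp (-ε j) ≤ 1 := fun j => exp_le_one_iff.2 (neg_nonpos.2 (hε j).le)
  have hsummable (c : Fin d → ℤ) := summable_Geo_mul hp0 hp1
    (fun k => prod_GeoLT_nonneg univ hq0 hq1 fun j => k - c j)
    (fun k => prod_GeoLT_le_one univ hq0 hq1 fun j => k - c j)
  refine tsum_le_mul_tsum_of_le_mul_succ (exp_pos _).le
    (fun k => mul_nonneg (Geo_nonneg hp0 hp1.le _) (prod_GeoLT_nonneg _ hq0 hq1 _))
    (hsummable b) (hsummable a) fun k => ?_
  rw [Geo_exp_neg_natCast, mul_assoc]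
  refine mul_le_mul_of_nonneg_left (mul_le_mul_of_nonneg_left ?_ (Geo_nonneg hp0 hp1.le _))
    (exp_pos _).le
  refine prod_GeoLT_le_prod_GeoLT univ hq0 hq1 fun j => ?_
  have hba := (abs_le.1 (hab j)).1
  push_cast
  linarith
end

section
/- Let O be a countable linearly ordered set, d ∈ ℕ, and ε', ε_1, …, ε_d > 0. Let Q_1, …, Q_d and Q'_1, …, Q'_d be probability mass functions on O such that for every j and every subset U ⊆ O, Q_j(U) ≤ e^{ε_j}·Q'_j(U) and Q'_j(U) ≤ e^{ε_j}·Q_j(U). Order the set (O × {1,…,d}) ∪ {⊥} by taking ⊥ as minimum and ordering O × {1,…,d} lexicographically. For (o, i) ∈ O × {1,…,d} and j ≠ i let U^j_{o,i} = {o' ∈ O : (o', j) > (o, i)}, and define A(o, i) = ∑_{k=0}^∞ Geo(e^{−ε'})(k) · e^{−ε_i k}·Q_i(o) · ∏_{j ≠ i} (1 − e^{−ε_j k}·Q_j(U^j_{o,i})), and A'(o, i) analogously with primed PMFs. Then A(o, i) ≤ e^{2ε_i + ε'}·A'(o, i) for every (o, i). (This is the ex-post pure-DP guarantee ε̃(o,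 i) = 2ε_i + ε' for the hyperparameter tuning mechanism with random dropping; its probability of outputting ⊥ is the same on both datasets, so ε̃(⊥) = 0.) -/
open Real Finset

lemma Geo_nat (p : ℝ) (k : ℕ) : Geo p (k : ℤ) = (1 - p) * p ^ k := by
  simp [Geo]

/-- Ex-post pure-DP guarantee of the hyperparameter tuning mechanism with random dropping
(Theorem `max-score`): `Q j`, `Q' j` are the output distributions of the `ε_j`-DP mechanism
`M_j` on neighboring datasets, `U^j_{o,i} = {o' | (o', j) > (o, i)}` in the lexicographic
order, and the probability that the mechanism outputs `(o, i)` increases by at most a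
factor `e^(2 ε_i + ε')`. -/
theorem hyperparameter_tuning_expost_pure_dp
    {O : Type*} [Countable O] [LinearOrder O]
    (d : ℕ) (ε' : ℝ) (hε' : 0 < ε')
    (ε : Fin d → ℝ) (hε : ∀ j, 0 < ε j)
    (Q Q' : Fin d → O → ℝ)
    (hQ0 : ∀ j o, 0 ≤ Q j o) (hQ'0 : ∀ j o, 0 ≤ Q' j o)
    (hQ1 : ∀ j, HasSum (Q j) 1) (hQ'1 : ∀ j, HasSum (Q' j) 1)
    (hDP : ∀ j (U : Set O), (∑' o : U, Q j o) ≤ Real.exp (ε j) * ∑' o : U, Q' j o)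
    (hDP' : ∀ j (U : Set O), (∑' o : U, Q' j o) ≤ Real.exp (ε j) * ∑' o : U, Q j o)
    (o : O) (i : Fin d) :
    (∑' k : ℕ, Geo (Real.exp (-ε')) k * (Real.exp (-(ε i) * k) * Q i o) *
        ∏ j ∈ Finset.univ.filter (fun j => j ≠ i),
          (1 - Real.exp (-(ε j) * k) *
            ∑' o' : {o' : O // o < o' ∨ (o' = o ∧ i < j)}, Q j o'))
    ≤ Real.exp (2 * ε i + ε') *
      ∑' k : ℕ, Geo (Real.exp (-ε')) k * (Real.exp (-(ε i) * k) * Q' i o) *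
        ∏ j ∈ Finset.univ.filter (fun j => j ≠ i),
          (1 - Real.exp (-(ε j) * k) *
            ∑' o' : {o' : O // o < o' ∨ (o' = o ∧ i < j)}, Q' j o') := by
  set γ : ℝ := Real.exp (-ε') with hγdef
  have hγ0 : 0 < γ := Real.exp_pos _
  have hγ1 : γ < 1 := by
    rw [hγdef]
    calc Real.exp (-ε') < Real.exp 0 := Real.exp_lt_exp.mpr (by linarith)
      _ = 1 := Real.exp_zero
  have h1γ : 0 ≤ 1 - γ := by linarith
  -- abbreviations for the tail masses
  set S : Fin d → ℝ := fun j => ∑' o' : {o' : O // o < o' ∨ (o' = o ∧ i < j)}, Q j o' with hSdef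
  set S' : Fin d → ℝ := fun j => ∑' o' : {o' : O // o < o' ∨ (o' = o ∧ i < j)}, Q' j o' with hS'def
  have hSsum : ∀ j : Fin d, Summable (fun o' : {o' : O // o < o' ∨ (o' = o ∧ i < j)} => Q j o') :=
    fun j => (hQ1 j).summable.subtype _
  have hS'sum : ∀ j : Fin d, Summable (fun o' : {o' : O // o < o' ∨ (o' = o ∧ i < j)} => Q' j o') :=
    fun j => (hQ'1 j).summable.subtype _
  have hS0 : ∀ j, 0 ≤ S j := fun j => tsum_nonneg (fun o' => hQ0 j o')
  have hS'0 : ∀ j, 0 ≤ S' j := fun j => tsum_nonneg (fun o' => hQ'0 j o')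
  have hS1 : ∀ j, S j ≤ 1 := by
    intro j
    have h := Summable.tsum_le_tsum_of_inj (Subtype.val : {o' : O // o < o' ∨ (o' = o ∧ i < j)} → O)
      Subtype.val_injective (fun c _ => hQ0 j c) (fun b => le_rfl) (hSsum j) (hQ1 j).summable
    rw [hSdef]
    simpa [(hQ1 j).tsum_eq] using h
  have hS'1 : ∀ j, S' j ≤ 1 := by
    intro j
    have h := Summable.tsum_le_tsum_of_inj (Subtype.val : {o' : O // o < o' ∨ (o' = o ∧ i < j)} → O)
      Subtype.val_injective (fun c _ => hQ'0 j c) (fun b => le_rfl) (hS'sum j) (hQ'1 j).summable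
    rw [hS'def]
    simpa [(hQ'1 j).tsum_eq] using h
  have hSS' : ∀ j, S' j ≤ Real.exp (ε j) * S j := by
    intro j
    exact hDP' j {o' : O | o < o' ∨ (o' = o ∧ i < j)}
  have hQ'le1 : ∀ u, Q' i u ≤ 1 := fun u => le_hasSum (hQ'1 i) u (fun _ _ => hQ'0 i _)
  have hQle1 : ∀ u, Q i u ≤ 1 := fun u => le_hasSum (hQ1 i) u (fun _ _ => hQ0 i _)
  set F : ℕ → ℝ := fun k => Geo γ (k : ℤ) * (Real.exp (-(ε i) * k) * Q i o) *
      ∏ j ∈ Finset.univ.filter (fun j => j ≠ i), (1 - Real.exp (-(ε j) * k) * S j) with hFdef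
  set G : ℕ → ℝ := fun k => Geo γ (k : ℤ) * (Real.exp (-(ε i) * k) * Q' i o) *
      ∏ j ∈ Finset.univ.filter (fun j => j ≠ i), (1 - Real.exp (-(ε j) * k) * S' j) with hGdef
  -- nonnegativity of factors
  have hfac0 : ∀ (k : ℕ) (j : Fin d), 0 ≤ 1 - Real.exp (-(ε j) * k) * S j := by
    intro k j
    have h1 : Real.exp (-(ε j) * k) ≤ 1 := Real.exp_le_one_iff.mpr
      (by
        have : (0:ℝ) ≤ (k:ℝ) := Nat.cast_nonneg k
        nlinarith [hε j])
    nlinarith [hS0 j, hS1 j, Real.exp_pos (-(ε j) * (k:ℝ))]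
  have hfac0' : ∀ (k : ℕ) (j : Fin d), 0 ≤ 1 - Real.exp (-(ε j) * k) * S' j := by
    intro k j
    have h1 : Real.exp (-(ε j) * k) ≤ 1 := Real.exp_le_one_iff.mpr
      (by
        have : (0:ℝ) ≤ (k:ℝ) := Nat.cast_nonneg k
        nlinarith [hε j])
    nlinarith [hS'0 j, hS'1 j, Real.exp_pos (-(ε j) * (k:ℝ))]
  have hfac1 : ∀ (k : ℕ) (j : Fin d), 1 - Real.exp (-(ε j) * k) * S j ≤ 1 := by
    intro k j
    nlinarith [hS0 j, Real.exp_pos (-(ε j) * (k:ℝ))]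
  have hfac1' : ∀ (k : ℕ) (j : Fin d), 1 - Real.exp (-(ε j) * k) * S' j ≤ 1 := by
    intro k j
    nlinarith [hS'0 j, Real.exp_pos (-(ε j) * (k:ℝ))]
  have hprodnn : ∀ k : ℕ, 0 ≤ ∏ j ∈ Finset.univ.filter (fun j => j ≠ i),
      (1 - Real.exp (-(ε j) * k) * S j) :=
    fun k => Finset.prod_nonneg (fun j _ => hfac0 k j)
  have hprodnn' : ∀ k : ℕ, 0 ≤ ∏ j ∈ Finset.univ.filter (fun j => j ≠ i),
      (1 - Real.exp (-(ε j) * k) * S' j) :=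
    fun k => Finset.prod_nonneg (fun j _ => hfac0' k j)
  have hprodle1 : ∀ k : ℕ, (∏ j ∈ Finset.univ.filter (fun j => j ≠ i),
      (1 - Real.exp (-(ε j) * k) * S j)) ≤ 1 :=
    fun k => Finset.prod_le_one (fun j _ => hfac0 k j) (fun j _ => hfac1 k j)
  have hprodle1' : ∀ k : ℕ, (∏ j ∈ Finset.univ.filter (fun j => j ≠ i),
      (1 - Real.exp (-(ε j) * k) * S' j)) ≤ 1 :=
    fun k => Finset.prod_le_one (fun j _ => hfac0' k j) (fun j _ => hfac1' k j)
  -- nonnegativity and geometric bounds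
  have hexpk1 : ∀ k : ℕ, Real.exp (-(ε i) * k) ≤ 1 := by
    intro k
    apply Real.exp_le_one_iff.mpr
    have : (0:ℝ) ≤ (k:ℝ) := Nat.cast_nonneg k
    nlinarith [hε i]
  have hFnn : ∀ k : ℕ, 0 ≤ F k := by
    intro k
    rw [hFdef]
    simp only [Geo_nat]
    exact mul_nonneg (mul_nonneg (mul_nonneg h1γ (pow_nonneg hγ0.le k))
      (mul_nonneg (Real.exp_pos _).le (hQ0 i o))) (hprodnn k)
  have hGnn : ∀ k : ℕ, 0 ≤ G k := by
    intro k
    rw [hGdef]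
    simp only [Geo_nat]
    exact mul_nonneg (mul_nonneg (mul_nonneg h1γ (pow_nonneg hγ0.le k))
      (mul_nonneg (Real.exp_pos _).le (hQ'0 i o))) (hprodnn' k)
  have hFle : ∀ k : ℕ, F k ≤ (1 - γ) * γ ^ k := by
    intro k
    rw [hFdef]
    simp only [Geo_nat]
    have h1 : Real.exp (-(ε i) * k) * Q i o ≤ 1 :=
      mul_le_one₀ (hexpk1 k) (hQ0 i o) (hQle1 o)
    calc (1 - γ) * γ ^ k * (Real.exp (-(ε i) * k) * Q i o) *
          ∏ j ∈ Finset.univ.filter (fun j => j ≠ i), (1 - Real.exp (-(ε j) * k) * S j)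
        ≤ (1 - γ) * γ ^ k * 1 * 1 := by
          have hb : 0 ≤ (1 - γ) * γ ^ k := mul_nonneg h1γ (pow_nonneg hγ0.le k)
          apply mul_le_mul (mul_le_mul le_rfl h1 (mul_nonneg (Real.exp_pos _).le (hQ0 i o))
            hb) (hprodle1 k) (hprodnn k) (by linarith)
      _ = (1 - γ) * γ ^ k := by ring
  have hGle : ∀ k : ℕ, G k ≤ (1 - γ) * γ ^ k := by
    intro k
    rw [hGdef]
    simp only [Geo_nat]
    have h1 : Real.exp (-(ε i) * k) * Q' i o ≤ 1 :=
      mul_le_one₀ (hexpk1 k) (hQ'0 i o) (hQ'le1 o)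
    calc (1 - γ) * γ ^ k * (Real.exp (-(ε i) * k) * Q' i o) *
          ∏ j ∈ Finset.univ.filter (fun j => j ≠ i), (1 - Real.exp (-(ε j) * k) * S' j)
        ≤ (1 - γ) * γ ^ k * 1 * 1 := by
          have hb : 0 ≤ (1 - γ) * γ ^ k := mul_nonneg h1γ (pow_nonneg hγ0.le k)
          apply mul_le_mul (mul_le_mul le_rfl h1 (mul_nonneg (Real.exp_pos _).le (hQ'0 i o))
            hb) (hprodle1' k) (hprodnn' k) (by linarith)
      _ = (1 - γ) * γ ^ k := by ring
  have hsumgeo : Summable (fun k : ℕ => (1 - γ) * γ ^ k) :=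
    (summable_geometric_of_lt_one hγ0.le hγ1).mul_left _
  have hFs : Summable F := Summable.of_nonneg_of_le hFnn hFle hsumgeo
  have hGs : Summable G := Summable.of_nonneg_of_le hGnn hGle hsumgeo
  -- the key pointwise inequality
  have key : ∀ k : ℕ, F k ≤ Real.exp (2 * ε i + ε') * G (k + 1) := by
    intro k
    have hQio : Q i o ≤ Real.exp (ε i) * Q' i o := by
      have h := hDP i {o}
      simpa [tsum_singleton] using h
    have hprod : (∏ j ∈ Finset.univ.filter (fun j => j ≠ i), (1 - Real.exp (-(ε j) * k) * S j))
        ≤ ∏ j ∈ Finset.univ.filter (fun j => j ≠ i),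
          (1 - Real.exp (-(ε j) * ((k:ℝ) + 1)) * S' j) := by
      apply Finset.prod_le_prod (fun j _ => hfac0 k j)
      intro j _
      have h2 : Real.exp (-(ε j) * ((k:ℝ) + 1)) * Real.exp (ε j) = Real.exp (-(ε j) * k) := by
        rw [← Real.exp_add]; congr 1; ring
      have h3 : Real.exp (-(ε j) * ((k:ℝ) + 1)) * S' j ≤ Real.exp (-(ε j) * k) * S j := by
        calc Real.exp (-(ε j) * ((k:ℝ) + 1)) * S' j
            ≤ Real.exp (-(ε j) * ((k:ℝ) + 1)) * (Real.exp (ε j) * S j) := by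
              apply mul_le_mul_of_nonneg_left (hSS' j) (Real.exp_pos _).le
          _ = Real.exp (-(ε j) * k) * S j := by rw [← mul_assoc, h2]
      linarith
    have hfaceq : Real.exp (2 * ε i + ε') * ((1 - γ) * γ ^ (k + 1) *
          Real.exp (-(ε i) * ((k:ℝ) + 1)))
        = (1 - γ) * γ ^ k * Real.exp (-(ε i) * k) * Real.exp (ε i) := by
      have h4 : Real.exp (2 * ε i + ε') * γ * Real.exp (-(ε i) * ((k:ℝ) + 1))
          = Real.exp (-(ε i) * k) * Real.exp (ε i) := by
        rw [hγdef, ← Real.exp_add, ← Real.exp_add, ← Real.exp_add]; congr 1; ring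
      calc Real.exp (2 * ε i + ε') * ((1 - γ) * γ ^ (k + 1) * Real.exp (-(ε i) * ((k:ℝ) + 1)))
          = (1 - γ) * γ ^ k * (Real.exp (2 * ε i + ε') * γ * Real.exp (-(ε i) * ((k:ℝ) + 1))) := by
            rw [pow_succ]; ring
        _ = (1 - γ) * γ ^ k * Real.exp (-(ε i) * k) * Real.exp (ε i) := by rw [h4]; ring
    rw [hFdef, hGdef]
    simp only [Geo_nat]
    push_cast
    calc (1 - γ) * γ ^ k * (Real.exp (-(ε i) * k) * Q i o) *
          ∏ j ∈ Finset.univ.filter (fun j => j ≠ i), (1 - Real.exp (-(ε j) * k) * S j)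
        = (1 - γ) * γ ^ k * Real.exp (-(ε i) * k) *
          (Q i o * ∏ j ∈ Finset.univ.filter (fun j => j ≠ i),
            (1 - Real.exp (-(ε j) * k) * S j)) := by ring
      _ ≤ (1 - γ) * γ ^ k * Real.exp (-(ε i) * k) *
          ((Real.exp (ε i) * Q' i o) * ∏ j ∈ Finset.univ.filter (fun j => j ≠ i),
            (1 - Real.exp (-(ε j) * ((k:ℝ) + 1)) * S' j)) := by
          apply mul_le_mul_of_nonneg_left _
            (mul_nonneg (mul_nonneg h1γ (pow_nonneg hγ0.le k)) (Real.exp_pos _).le)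
          exact mul_le_mul hQio hprod (hprodnn k)
            (mul_nonneg (Real.exp_pos _).le (hQ'0 i o))
      _ = Real.exp (2 * ε i + ε') * ((1 - γ) * γ ^ (k + 1) *
          (Real.exp (-(ε i) * ((k:ℝ) + 1)) * Q' i o) *
          ∏ j ∈ Finset.univ.filter (fun j => j ≠ i),
            (1 - Real.exp (-(ε j) * ((k:ℝ) + 1)) * S' j)) := by
          linear_combination -(Q' i o * ∏ j ∈ Finset.univ.filter (fun j => j ≠ i),
            (1 - Real.exp (-(ε j) * ((k:ℝ) + 1)) * S' j)) * hfaceq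
  -- assemble
  have hGshift : Summable (fun k : ℕ => G (k + 1)) :=
    hGs.comp_injective Nat.succ_injective
  calc (∑' k : ℕ, F k)
      ≤ ∑' k : ℕ, Real.exp (2 * ε i + ε') * G (k + 1) :=
        Summable.tsum_le_tsum key hFs (hGshift.mul_left _)
    _ = Real.exp (2 * ε i + ε') * ∑' k : ℕ, G (k + 1) := tsum_mul_left
    _ ≤ Real.exp (2 * ε i + ε') * ∑' k : ℕ, G k := by
        apply mul_le_mul_of_nonneg_left _ (Real.exp_pos _).le
        exact Summable.tsum_le_tsum_of_inj Nat.succ Nat.succ_injective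
          (fun c _ => hGnn c) (fun b => le_rfl) hGshift hGs
end
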